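/- Let p, q, k ≥ 1. On ℂ[z_{i,a}, w_{j,a} : 1 ≤ i ≤ p, 1 ≤ j ≤ q, 1 ≤ a ≤ k], let π be the linear map on Mat_{p+q}(ℂ) determined by: π(E_{i,j}) = −Σ_{a=1}^k z_{j,a} ∂/∂z_{i,a} for 1 ≤ i,j ≤ p; π(E_{i,p+j}) = 2 Σ_{a=1}^k ∂/∂z_{i,a} ∂/∂w_{j,a} for 1 ≤ i ≤ p, 1 ≤ j ≤ q; π(E_{p+i,j}) = multiplication by −(1/2) Σ_{a=1}^k z_{j,a} w_{i,a} for 1 ≤ i ≤ q, 1 ≤ j ≤ p; and π(E_{p+i,p+j}) = Σ_{a=1}^k ∂/∂w_{j,a} ∘ (mult by w_{i,a}) (that is, Σ_a w_{i,a}∂/∂w_{j,a} + kδ_{ij}) for 1 ≤ i,j ≤ q. Then: (a) π(X)∘π(Y) − π(Y)∘π(X) = π(XY − YX) for all X, Y ∈ Mat_{p+q}(ℂ), so π is a Lie algebra homomorphism gl_{p+q}(ℂ) → End of the polynomial algebra; (b) for every invertible g ∈ Mat_k(ℂ), letting ρ(g) be the ℂ-algebra endomorphism determined by z_{i,a} ↦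 Σ_b z_{i,b} g_{b,a} and w_{j,a} ↦ Σ_b w_{j,b} (g⁻¹)_{a,b}, one has ρ(g) ∘ π(X) = π(X) ∘ ρ(g) for all X ∈ Mat_{p+q}(ℂ). -/

import Mathlib

open Matrix MvPolynomial

/-- Polynomials in `z_{i,a}` (`Sum.inl (i,a)`) and `w_{j,a}` (`Sum.inr (j,a)`). -/
abbrev PolyU (p q k : ℕ) := MvPolynomial ((Fin p × Fin k) ⊕ (Fin q × Fin k)) ℂ

/-- The values of `π` on the matrix units `E_{r,s}` of `gl_{p+q}(ℂ)`. -/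
noncomputable def PiU (p q k : ℕ) :
    Fin p ⊕ Fin q → Fin p ⊕ Fin q → Module.End ℂ (PolyU p q k)
  | Sum.inl i, Sum.inl j =>
      -∑ a : Fin k,
        LinearMap.mulLeft ℂ (MvPolynomial.X (Sum.inl (j, a))) *
          (MvPolynomial.pderiv (R := ℂ) (Sum.inl (i, a))).toLinearMap
  | Sum.inl i, Sum.inr j =>
      (2 : ℂ) • ∑ a : Fin k,
        (MvPolynomial.pderiv (R := ℂ) (Sum.inl (i, a))).toLinearMap *
          (MvPolynomial.pderiv (R := ℂ) (Sum.inr (j, a))).toLinearMap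
  | Sum.inr i, Sum.inl j =>
      LinearMap.mulLeft ℂ
        ((-(1 / 2) : ℂ) • ∑ a : Fin k,
          MvPolynomial.X (Sum.inl (j, a)) * MvPolynomial.X (Sum.inr (i, a)))
  | Sum.inr i, Sum.inr j =>
      ∑ a : Fin k,
        (MvPolynomial.pderiv (R := ℂ) (Sum.inr (j, a))).toLinearMap *
          LinearMap.mulLeft ℂ (MvPolynomial.X (Sum.inr (i, a)))

/-- The linear extension of the values on the matrix units to all of `gl_{p+q}(ℂ)`. -/
noncomputable def piU (p q k : ℕ) (X : Matrix (Fin p ⊕ Fin q) (Fin p ⊕ Fin q) ℂ) :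
    Module.End ℂ (PolyU p q k) :=
  ∑ r : Fin p ⊕ Fin q, ∑ s : Fin p ⊕ Fin q, X r s • PiU p q k r s

/-- The substitution operator `ρ(g)` determined by `z_{i,a} ↦ Σ_b z_{i,b} g_{b,a}` and
`w_{j,a} ↦ Σ_b w_{j,b} (g⁻¹)_{a,b}`, i.e. `(z; w) ↦ (z g; w (gᵀ)⁻¹)`. -/
noncomputable def rhoU (p q k : ℕ) (g : Matrix (Fin k) (Fin k) ℂ) :
    PolyU p q k →ₐ[ℂ] PolyU p q k :=
  MvPolynomial.aeval fun v =>
    match v with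
    | Sum.inl (i, a) =>
        ∑ b : Fin k, MvPolynomial.X (Sum.inl (i, b)) * MvPolynomial.C (g b a)
    | Sum.inr (j, a) =>
        ∑ b : Fin k, MvPolynomial.X (Sum.inr (j, b)) * MvPolynomial.C (g⁻¹ a b)

/-!
Put `A = (-z, 2 ∂_w)` and `B = (∂_z, w / 2)`, indexed by `(Fin p ⊕ Fin q) × Fin k`. These are
canonical pairs (`[A_x, B_y] = δ_{xy}`, the `A`'s commute, the `B`'s commute), and
`π(E_{rs}) = Σ_a B_{r,a} A_{s,a} + k δ_{rs}`. For any canonical pairs the operators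
`Σ_a B_{r,a} A_{s,a}` satisfy the commutation relations of the matrix units of `gl_n`, and a central
shift by `k δ_{rs}` preserves them; this gives (a).

For (b): conjugation by `ρ(g)` transforms the families `z_{i,·}` and `∂_{z_{i,·}}` by `g` and the
families `w_{j,·}` and `∂_{w_{j,·}}` by `g⁻¹` (for the derivatives this is the chain rule). Each
block of `π` contracts the index `a` either between `z` and `∂_z` or between `w` and `∂_w`, which is
invariant for every `g`, or between `z` and `w` or between `∂_z` and `∂_w`, which is invariant
because `g g⁻¹ = g⁻¹ g = 1`.
-/

theorem Finset.sum_mul_sum_sub_sum_mul_sum {R ι : Type*} [Ring R] (s : Finset ι) (f g : ι → R) :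
    (∑ i ∈ s, f i) * (∑ j ∈ s, g j) - (∑ j ∈ s, g j) * (∑ i ∈ s, f i) =
      ∑ i ∈ s, ∑ j ∈ s, (f i * g j - g j * f i) := by
  simp only [Finset.sum_mul_sum, Finset.sum_sub_distrib]
  rw [Finset.sum_comm (f := fun j i => g j * f i)]

section GlRelations

variable {R n : Type*} [Ring R] [DecidableEq n]

def SatisfiesGlRelations (e : n → n → R) : Prop :=
  ∀ r s t u, e r s * e t u - e t u * e r s =
    (if s = t then e r u else 0) - (if u = r then e t s else 0)

theorem SatisfiesGlRelations.sum_smul_commutator {K : Type*} [CommRing K] [Algebra K R] [Fintype n]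
    {e : n → n → R} (he : SatisfiesGlRelations e) (X Y : Matrix n n K) :
    (∑ r, ∑ s, X r s • e r s) * (∑ t, ∑ u, Y t u • e t u) -
        (∑ t, ∑ u, Y t u • e t u) * (∑ r, ∑ s, X r s • e r s) =
      ∑ r, ∑ s, (X * Y - Y * X) r s • e r s := by
  have hcomm : ∀ r s t u, X r s • e r s * Y t u • e t u - Y t u • e t u * X r s • e r s =
      (X r s * Y t u) • ((if s = t then e r u else 0) - (if u = r then e t s else 0)) := by
    intro r s t u
    rw [← he, smul_mul_smul_comm, smul_mul_smul_comm, mul_comm (Y t u), smul_sub]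
  simp only [Finset.sum_mul_sum_sub_sum_mul_sum, hcomm, smul_sub, Finset.sum_sub_distrib, smul_ite,
    smul_zero, Finset.sum_ite_irrel, Finset.sum_const_zero, Finset.sum_ite_eq',
    Finset.mem_univ, if_true, Matrix.sub_apply, sub_smul, Matrix.mul_apply, Finset.sum_smul]
  congr 1
  · exact Finset.sum_congr rfl fun r _ => Finset.sum_comm
  · rw [Finset.sum_comm]
    exact Finset.sum_congr rfl fun t _ => by rw [Finset.sum_comm]; simp only [mul_comm]

theorem SatisfiesGlRelations.add_central {e : n → n → R} (he : SatisfiesGlRelations e) {c : R}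
    (hc : ∀ x, Commute c x) : SatisfiesGlRelations fun r s => e r s + if r = s then c else 0 := by
  have hδ : ∀ (r s : n) (x : R), Commute (if r = s then c else 0) x := fun r s x => by
    split_ifs
    exacts [hc x, Commute.zero_left x]
  have hshift {x y a b : R} (ha : ∀ z, Commute a z) (hb : ∀ z, Commute b z) :
      (x + a) * (y + b) - (y + b) * (x + a) = x * y - y * x := by
    simp only [add_mul, mul_add, (ha y).eq, (hb x).eq, (ha b).eq]
    abel
  intro r s t u
  rw [hshift (hδ r s) (hδ t u), he]
  split_ifs <;> grind

end GlRelations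

section CanonicalCommutation

variable {R : Type*} [Ring R]

theorem mul_mul_sub_mul_mul_of_ccr {ι : Type*} [DecidableEq ι] {A B : ι → R}
    (hA : ∀ i j, Commute (A i) (A j)) (hB : ∀ i j, Commute (B i) (B j))
    (hAB : ∀ i j, A i * B j - B j * A i = if i = j then 1 else 0) (i j k l : ι) :
    B i * A j * (B k * A l) - B k * A l * (B i * A j) =
      (if j = k then B i * A l else 0) - (if l = i then B k * A j else 0) := by
  have hswap : ∀ i j, A i * B j = B j * A i + if i = j then 1 else 0 := fun i j => by
    rw [← hAB, add_sub_cancel]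
  calc B i * A j * (B k * A l) - B k * A l * (B i * A j)
      = B i * (A j * B k) * A l - B k * (A l * B i) * A j := by noncomm_ring
    _ = _ := by
      rw [hswap, hswap]
      split_ifs <;> simp only [mul_add, add_mul, mul_one, add_zero,
        ← mul_assoc, (hB i k).eq, mul_assoc _ (A j), (hA j l).eq] <;> abel

theorem satisfiesGlRelations_sum_mul_of_ccr {n m : Type*} [DecidableEq n] [DecidableEq m]
    [Fintype m] {A B : n × m → R} (hA : ∀ i j, Commute (A i) (A j))
    (hB : ∀ i j, Commute (B i) (B j))
    (hAB : ∀ i j, A i * B j - B j * A i = if i = j then 1 else 0) :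
    SatisfiesGlRelations fun r s => ∑ a, B (r, a) * A (s, a) := by
  intro r s t u
  simp only [Finset.sum_mul_sum_sub_sum_mul_sum, mul_mul_sub_mul_mul_of_ccr hA hB hAB,
    Prod.mk.injEq, ite_and, Finset.sum_sub_distrib, Finset.sum_ite_irrel, Finset.sum_const_zero,
    Finset.sum_ite_eq, Finset.sum_ite_eq', Finset.mem_univ, if_true]

end CanonicalCommutation

namespace MvPolynomial

variable (R : Type*) {σ : Type*} [CommRing R]

noncomputable abbrev mulX (v : σ) : Module.End R (MvPolynomial σ R) :=
  LinearMap.mulLeft R (X v)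

noncomputable abbrev pderivₗ (v : σ) : Module.End R (MvPolynomial σ R) :=
  (pderiv v).toLinearMap

variable {R}

theorem pderiv_pderiv_comm (u v : σ) (f : MvPolynomial σ R) :
    pderiv u (pderiv v f) = pderiv v (pderiv u f) := by
  classical
  let D : σ → Derivation R (MvPolynomial σ R) (MvPolynomial σ R) := pderiv
  have hbracket : ⁅D u, D v⁆ = 0 := derivation_ext fun i => by
    rw [Derivation.commutator_apply, pderiv_X, pderiv_X]
    simp [Pi.single_apply, apply_ite]
  have h := congr($hbracket f)
  rw [Derivation.commutator_apply, Derivation.zero_apply] at h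
  exact sub_eq_zero.mp h

theorem pderiv_aeval {S τ : Type*} [CommSemiring S] [Fintype σ] (s : σ → MvPolynomial τ S)
    (u : τ) (f : MvPolynomial σ S) :
    pderiv u (aeval s f) = ∑ v, aeval s (pderiv v f) * pderiv u (s v) := by
  classical
  induction f using MvPolynomial.induction_on with
  | C a => simp
  | add f g hf hg => simp only [map_add, hf, hg, add_mul, Finset.sum_add_distrib]
  | mul_X f w ih =>
    simp only [map_mul, aeval_X, Derivation.leibniz, pderiv_X, smul_eq_mul, ih,
      add_mul, Finset.sum_add_distrib, Pi.single_apply, map_zero, mul_ite, mul_one,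
      mul_zero, map_add, apply_ite (aeval s), ite_mul, zero_mul, Finset.sum_ite_eq,
      Finset.mem_univ, if_true, Finset.mul_sum, mul_assoc]

theorem mulLeft_sum_X_mul_C {ι : Type*} (s : Finset ι) (e : ι → σ) (c : ι → R) :
    LinearMap.mulLeft R (∑ b ∈ s, X (e b) * C (c b)) = ∑ b ∈ s, c b • mulX R (e b) :=
  LinearMap.ext fun f => by simp [Finset.sum_mul, mul_comm _ (C _), C_mul']

end MvPolynomial

theorem AlgHom.toLinearMap_mul_mulLeft {R A : Type*} [CommSemiring R] [Semiring A] [Algebra R A]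
    (φ : A →ₐ[R] A) (a : A) :
    φ.toLinearMap * LinearMap.mulLeft R a = LinearMap.mulLeft R (φ a) * φ.toLinearMap :=
  LinearMap.ext fun x => map_mul φ a x

section Intertwining

variable {K R m : Type*} [CommRing K] [Ring R] [Algebra K R] [Fintype m] {ρ : R} {L M : m → R}

theorem commute_sum_mul_of_left_right {S : Matrix m m K}
    (hL : ∀ c, ρ * L c = ∑ a, S a c • (L a * ρ)) (hM : ∀ a, M a * ρ = ∑ c, S a c • (ρ * M c)) :
    Commute ρ (∑ a, L a * M a) :=
  calc ρ * ∑ c, L c * M c = ∑ c, ∑ a, S a c • (L a * ρ * M c) := by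
        simp only [Finset.mul_sum, ← mul_assoc, hL, Finset.sum_mul, smul_mul_assoc]
    _ = ∑ a, ∑ c, S a c • (L a * (ρ * M c)) := by
        rw [Finset.sum_comm]
        simp only [mul_assoc]
    _ = (∑ a, L a * M a) * ρ := by
        simp only [Finset.sum_mul, mul_assoc, hM, Finset.mul_sum, mul_smul_comm]

theorem commute_sum_mul_of_right_right [DecidableEq m] {S T : Matrix m m K}
    (hL : ∀ a, L a * ρ = ∑ c, S a c • (ρ * L c)) (hM : ∀ a, M a * ρ = ∑ c, T c a • (ρ * M c))
    (hTS : T * S = 1) : Commute ρ (∑ a, L a * M a) := by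
  symm
  calc (∑ a, L a * M a) * ρ = ∑ a, ∑ c, ∑ d, (T c a * S a d) • (ρ * L d * M c) := by
        simp only [Finset.sum_mul, mul_assoc, hM, Finset.mul_sum, mul_smul_comm]
        simp only [← mul_assoc, hL, Finset.sum_mul, smul_mul_assoc, Finset.smul_sum, smul_smul]
    _ = ∑ c, ∑ d, (T * S) c d • (ρ * L d * M c) := by
        simp only [Matrix.mul_apply, Finset.sum_smul]
        rw [Finset.sum_comm]
        exact Finset.sum_congr rfl fun c _ => Finset.sum_comm
    _ = ρ * ∑ a, L a * M a := by
        simp [hTS, Matrix.one_apply, ite_smul, Finset.mul_sum, mul_assoc]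

theorem commute_sum_mul_of_left_left [DecidableEq m] {S T : Matrix m m K}
    (hL : ∀ c, ρ * L c = ∑ a, S a c • (L a * ρ)) (hM : ∀ c, ρ * M c = ∑ a, T c a • (M a * ρ))
    (hST : S * T = 1) : Commute ρ (∑ a, L a * M a) :=
  calc ρ * ∑ c, L c * M c = ∑ c, ∑ a, ∑ b, (S a c * T c b) • (L a * (M b * ρ)) := by
        simp only [Finset.mul_sum, ← mul_assoc, hL, Finset.sum_mul, smul_mul_assoc]
        simp only [mul_assoc, hM, Finset.mul_sum, mul_smul_comm, Finset.smul_sum, smul_smul]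
    _ = ∑ a, ∑ b, (S * T) a b • (L a * (M b * ρ)) := by
        simp only [Matrix.mul_apply, Finset.sum_smul]
        rw [Finset.sum_comm]
        exact Finset.sum_congr rfl fun a _ => Finset.sum_comm
    _ = (∑ a, L a * M a) * ρ := by
        simp [hST, Matrix.one_apply, ite_smul, Finset.sum_mul, mul_assoc]

end Intertwining

section Oscillator

variable {p q k : ℕ}

noncomputable def oscA : (Fin p ⊕ Fin q) × Fin k → Module.End ℂ (PolyU p q k)
  | (Sum.inl j, a) => -mulX ℂ (Sum.inl (j, a))
  | (Sum.inr j, a) => (2 : ℂ) • pderivₗ ℂ (Sum.inr (j, a))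

noncomputable def oscB : (Fin p ⊕ Fin q) × Fin k → Module.End ℂ (PolyU p q k)
  | (Sum.inl i, a) => pderivₗ ℂ (Sum.inl (i, a))
  | (Sum.inr i, a) => (1 / 2 : ℂ) • mulX ℂ (Sum.inr (i, a))

theorem commute_oscA (x y : (Fin p ⊕ Fin q) × Fin k) :
    Commute (oscA x : Module.End ℂ (PolyU p q k)) (oscA y) := by
  refine LinearMap.ext fun f => ?_
  rcases x with ⟨i | i, a⟩ <;> rcases y with ⟨j | j, b⟩ <;>
    simp [oscA, pderiv_X, mul_left_comm, pderiv_pderiv_comm]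

theorem commute_oscB (x y : (Fin p ⊕ Fin q) × Fin k) :
    Commute (oscB x : Module.End ℂ (PolyU p q k)) (oscB y) := by
  refine LinearMap.ext fun f => ?_
  rcases x with ⟨i | i, a⟩ <;> rcases y with ⟨j | j, b⟩ <;>
    simp [oscB, pderiv_X, mul_left_comm, pderiv_pderiv_comm]

theorem oscA_mul_oscB_sub (x y : (Fin p ⊕ Fin q) × Fin k) :
    (oscA x : Module.End ℂ (PolyU p q k)) * oscB y - oscB y * oscA x = if x = y then 1 else 0 := by
  refine LinearMap.ext fun f => ?_
  rcases x with ⟨i | i, a⟩ <;> rcases y with ⟨j | j, b⟩ <;>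
    simp [oscA, oscB, pderiv_X, Pi.single_apply, Prod.ext_iff, eq_comm, mul_left_comm,
      pderiv_pderiv_comm, apply_ite (fun T : Module.End ℂ (PolyU p q k) => T f)]

theorem PiU_eq_sum_oscB_mul_oscA (r s : Fin p ⊕ Fin q) :
    PiU p q k r s =
      ∑ a, oscB (r, a) * oscA (s, a) + if r = s then (k : Module.End ℂ _) else 0 := by
  refine LinearMap.ext fun f => ?_
  rcases r with i | i <;> rcases s with j | j <;>
    simp [PiU, oscA, oscB, pderiv_X, Pi.single_apply, Finset.sum_add_distrib,
      Finset.sum_mul, Finset.smul_sum, smul_smul, mul_assoc, mul_left_comm,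
      apply_ite (fun T : Module.End ℂ (PolyU p q k) => T f)]
  split_ifs <;> simp_all

end Oscillator

theorem satisfiesGlRelations_PiU (p q k : ℕ) : SatisfiesGlRelations (PiU p q k) := by
  rw [show PiU p q k = _ from funext fun r => funext fun s => PiU_eq_sum_oscB_mul_oscA r s]
  exact (satisfiesGlRelations_sum_mul_of_ccr commute_oscA commute_oscB
    oscA_mul_oscB_sub).add_central (Nat.cast_commute k)

section Invariance

variable {p q k : ℕ} (g : Matrix (Fin k) (Fin k) ℂ)

local notation "ρ" => AlgHom.toLinearMap (rhoU p q k g)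

theorem rhoU_mul_mulX_inl (i : Fin p) (c : Fin k) :
    ρ * mulX ℂ (Sum.inl (i, c)) = ∑ a, g a c • (mulX ℂ (Sum.inl (i, a)) * ρ) := by
  rw [AlgHom.toLinearMap_mul_mulLeft, rhoU, aeval_X]
  simp only [mulLeft_sum_X_mul_C, Finset.sum_mul, smul_mul_assoc]

theorem rhoU_mul_mulX_inr (j : Fin q) (c : Fin k) :
    ρ * mulX ℂ (Sum.inr (j, c)) = ∑ a, g⁻¹ c a • (mulX ℂ (Sum.inr (j, a)) * ρ) := by
  rw [AlgHom.toLinearMap_mul_mulLeft, rhoU, aeval_X]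
  simp only [mulLeft_sum_X_mul_C, Finset.sum_mul, smul_mul_assoc]

theorem pderivₗ_inl_mul_rhoU (i : Fin p) (a : Fin k) :
    pderivₗ ℂ (Sum.inl (i, a)) * ρ = ∑ c, g a c • (ρ * pderivₗ ℂ (Sum.inl (i, c))) := by
  refine LinearMap.ext fun f => ?_
  simp only [Module.End.mul_apply, LinearMap.sum_apply, LinearMap.smul_apply,
    AlgHom.toLinearMap_apply, pderivₗ, Derivation.coeFn_coe]
  rw [rhoU, pderiv_aeval, Fintype.sum_sum_type]
  simp [Fintype.sum_prod_type, pderiv_X, Pi.single_apply, mul_comm, ite_and, C_mul']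

theorem pderivₗ_inr_mul_rhoU (j : Fin q) (a : Fin k) :
    pderivₗ ℂ (Sum.inr (j, a)) * ρ = ∑ c, g⁻¹ c a • (ρ * pderivₗ ℂ (Sum.inr (j, c))) := by
  refine LinearMap.ext fun f => ?_
  simp only [Module.End.mul_apply, LinearMap.sum_apply, LinearMap.smul_apply,
    AlgHom.toLinearMap_apply, pderivₗ, Derivation.coeFn_coe]
  rw [rhoU, pderiv_aeval, Fintype.sum_sum_type]
  simp [Fintype.sum_prod_type, pderiv_X, Pi.single_apply, mul_comm, ite_and, C_mul']

-- Stated with `(-1 : ℂ) •` rather than `-`: the `Neg` of `Module.End` is not reducibly the one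
-- `Commute.neg_right` produces.
theorem PiU_inl_inl_eq (i j : Fin p) :
    PiU p q k (Sum.inl i) (Sum.inl j) =
      (-1 : ℂ) • ∑ a, mulX ℂ (Sum.inl (j, a)) * pderivₗ ℂ (Sum.inl (i, a)) :=
  LinearMap.ext fun f => by simp [PiU]

theorem PiU_inr_inl_eq (i : Fin q) (j : Fin p) :
    PiU p q k (Sum.inr i) (Sum.inl j) =
      (-(1 / 2) : ℂ) • ∑ a, mulX ℂ (Sum.inl (j, a)) * mulX ℂ (Sum.inr (i, a)) :=
  LinearMap.ext fun f => by simp [PiU, Finset.sum_mul, Finset.smul_sum, mul_assoc]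

theorem PiU_inr_inr_eq (i j : Fin q) :
    PiU p q k (Sum.inr i) (Sum.inr j) =
      ∑ a, mulX ℂ (Sum.inr (i, a)) * pderivₗ ℂ (Sum.inr (j, a)) +
        if i = j then (k : Module.End ℂ _) else 0 := by
  refine LinearMap.ext fun f => ?_
  simp [PiU, pderiv_X, Pi.single_apply, Finset.sum_add_distrib,
    apply_ite (fun T : Module.End ℂ (PolyU p q k) => T f)]

theorem commute_rhoU_PiU (hg : IsUnit g.det) (r s : Fin p ⊕ Fin q) :
    Commute ρ (PiU p q k r s) := by
  rcases r with i | i <;> rcases s with j | j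
  · rw [PiU_inl_inl_eq]
    exact (commute_sum_mul_of_left_right (rhoU_mul_mulX_inl g j)
      (pderivₗ_inl_mul_rhoU g i)).smul_right _
  · exact (commute_sum_mul_of_right_right (pderivₗ_inl_mul_rhoU g i) (pderivₗ_inr_mul_rhoU g j)
      (Matrix.nonsing_inv_mul g hg)).smul_right _
  · rw [PiU_inr_inl_eq]
    exact (commute_sum_mul_of_left_left (rhoU_mul_mulX_inl g j) (rhoU_mul_mulX_inr g i)
      (Matrix.mul_nonsing_inv g hg)).smul_right _
  · rw [PiU_inr_inr_eq]
    refine (commute_sum_mul_of_left_right (S := (g⁻¹)ᵀ) (rhoU_mul_mulX_inr g i)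
      (pderivₗ_inr_mul_rhoU g j)).add_right ?_
    split_ifs
    exacts [(Nat.cast_commute k _).symm, Commute.zero_right _]

theorem commute_rhoU_piU (hg : IsUnit g.det) (X : Matrix (Fin p ⊕ Fin q) (Fin p ⊕ Fin q) ℂ) :
    Commute ρ (piU p q k X) :=
  Commute.sum_right _ _ _ fun r _ => Commute.sum_right _ _ _ fun s _ =>
    (commute_rhoU_PiU g hg r s).smul_right _

end Invariance

theorem piU_lie_hom_and_GLk_invariant_general (p q k : ℕ) :
    -- (a) `π` is a Lie algebra homomorphism `gl_{p+q}(ℂ) → End(ℂ[z,w])`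
    (∀ X Y : Matrix (Fin p ⊕ Fin q) (Fin p ⊕ Fin q) ℂ,
      piU p q k X * piU p q k Y - piU p q k Y * piU p q k X
        = piU p q k (X * Y - Y * X)) ∧
    -- (b) `π(X)` commutes with the action `ρ(g)` for every invertible `g ∈ GL_k(ℂ)`
    (∀ g : Matrix (Fin k) (Fin k) ℂ, IsUnit g.det →
      ∀ X : Matrix (Fin p ⊕ Fin q) (Fin p ⊕ Fin q) ℂ,
        (rhoU p q k g).toLinearMap ∘ₗ piU p q k X
          = piU p q k X ∘ₗ (rhoU p q k g).toLinearMap) :=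
  ⟨(satisfiesGlRelations_PiU p q k).sum_smul_commutator, fun g hg X => (commute_rhoU_piU g hg X).eq⟩

theorem piU_lie_hom_and_GLk_invariant (p q k : ℕ) (hp : 1 ≤ p) (hq : 1 ≤ q) (hk : 1 ≤ k) :
    -- (a) `π` is a Lie algebra homomorphism `gl_{p+q}(ℂ) → End(ℂ[z,w])`
    (∀ X Y : Matrix (Fin p ⊕ Fin q) (Fin p ⊕ Fin q) ℂ,
      piU p q k X * piU p q k Y - piU p q k Y * piU p q k X
        = piU p q k (X * Y - Y * X)) ∧
    -- (b) `π(X)` commutes with the action `ρ(g)` for every invertible `g ∈ GL_k(ℂ)`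
    (∀ g : Matrix (Fin k) (Fin k) ℂ, IsUnit g.det →
      ∀ X : Matrix (Fin p ⊕ Fin q) (Fin p ⊕ Fin q) ℂ,
        (rhoU p q k g).toLinearMap ∘ₗ piU p q k X
          = piU p q k X ∘ₗ (rhoU p q k g).toLinearMap) :=
  piU_lie_hom_and_GLk_invariant_general p q k
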